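/- Let D be a triangulated category with a bounded t-structure, d ≥ 1, and S a semibrick in D^{[-d+1,0]}. Let φ(S) be the smallest d-FAE closed subcategory of D^{[-d+1,0]} containing S. Define recursively Φ^0(S) = S and Φ^n(S) = (Fac_d Φ^{n-1}(S)) * (Fac_d Φ^{n-1}(S)) for n ≥ 1. Then φ(S) = ⋃_{n ≥ 0} Φ^n(S). -/

import Mathlib

open CategoryTheory Category Limits Pretriangulated Triangulated

universe v u

variable {C : Type u} [Category.{v} C] [Preadditive C] [HasZeroObject C] [HasShift C ℤ]
  [∀ (n : ℤ), (shiftFunctor C n).Additive] [Pretriangulated C]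

/-- The t-structure `t` is bounded. -/
def IsBoundedTStr (t : TStructure C) : Prop :=
  ∀ X : C, ∃ a b : ℤ, t.ge a X ∧ t.le b X

/-- The `d`-extended heart `D^{[-d+1,0]}` of the t-structure `t`, as a set of objects. -/
def extHeart (t : TStructure C) (d : ℕ) : Set C :=
  fun X => t.le 0 X ∧ t.ge (1 - (d : ℤ)) X

/-- A set of objects closed under isomorphisms. -/
def IsoClosed (S : Set C) : Prop := ∀ ⦃X Y : C⦄, (X ≅ Y) → X ∈ S → Y ∈ S

/-- `Z ∈ D^{[-d+1,0]}` is a `d`-factor of `𝒳`: there are `d` distinguished triangles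
`Z_i → X_i → Z_{i-1} → Z_i[1]` (`1 ≤ i ≤ d`) with `Z_0 = Z`, `Z_i ∈ D^{[-d+1,0]}` and
`X_i ∈ 𝒳`. -/
def IsDFactor (t : TStructure C) (d : ℕ) (𝒳 : Set C) (Z : C) : Prop :=
  Z ∈ extHeart t d ∧
  ∃ (Zc : ℕ → C) (Xc : ℕ → C), Zc 0 = Z ∧
    ∀ i : ℕ, 1 ≤ i → i ≤ d →
      Zc i ∈ extHeart t d ∧ Xc i ∈ 𝒳 ∧
      ∃ (f : Zc i ⟶ Xc i) (g : Xc i ⟶ Zc (i - 1)) (h : Zc (i - 1) ⟶ (Zc i)⟦(1 : ℤ)⟧),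
        Triangle.mk f g h ∈ (distTriang C)

/-- `Fac_d(𝒳)`, the set of `d`-factors of `𝒳`. -/
def facd (t : TStructure C) (d : ℕ) (𝒳 : Set C) : Set C := fun Z => IsDFactor t d 𝒳 Z

/-- `𝒳` is closed under `d`-factors. -/
def ClosedUnderDFactors (t : TStructure C) (d : ℕ) (𝒳 : Set C) : Prop :=
  ∀ Z : C, IsDFactor t d 𝒳 Z → Z ∈ 𝒳

/-- `S` is closed under extensions: the middle term of any distinguished triangle whose
outer terms lie in `S` lies in `S`. -/
def ExtClosed (S : Set C) : Prop :=
  ∀ ⦃X Y Z : C⦄ (f : X ⟶ Y) (g : Y ⟶ Z) (h : Z ⟶ X⟦(1 : ℤ)⟧),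
    Triangle.mk f g h ∈ (distTriang C) → X ∈ S → Z ∈ S → Y ∈ S

/-- `𝒳 ⊆ D^{[-d+1,0]}` is `d`-FAE closed: closed under isomorphisms, `d`-factors and
extensions. -/
def IsDFAEClosed (t : TStructure C) (d : ℕ) (𝒳 : Set C) : Prop :=
  𝒳 ⊆ extHeart t d ∧ IsoClosed 𝒳 ∧ ClosedUnderDFactors t d 𝒳 ∧ ExtClosed 𝒳

/-- `A * B`: the set of objects `Z` fitting in a distinguished triangle `X → Z → Y → X[1]`
with `X ∈ A` and `Y ∈ B`. -/
def star (A B : Set C) : Set C := fun Z =>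
  ∃ (X : C) (_ : X ∈ A) (Y : C) (_ : Y ∈ B) (f : X ⟶ Z) (g : Z ⟶ Y) (h : Y ⟶ X⟦(1 : ℤ)⟧),
    Triangle.mk f g h ∈ (distTriang C)

/-- A suspended subcategory: closed under isomorphisms, extensions and positive shifts. -/
def Suspended (S : Set C) : Prop :=
  IsoClosed S ∧ ExtClosed S ∧ ∀ X ∈ S, X⟦(1 : ℤ)⟧ ∈ S

/-- The aisle `D^{≤ n}` as a set. -/
def aisle (t : TStructure C) (n : ℤ) : Set C := fun X => t.le n X

/-- The coaisle `D^{≥ n}` as a set. -/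
def coaisle (t : TStructure C) (n : ℤ) : Set C := fun X => t.ge n X

/-- The right Hom-orthogonal `S^⊥` inside the extended heart. -/
def rPerp (t : TStructure C) (d : ℕ) (S : Set C) : Set C :=
  fun Z => Z ∈ extHeart t d ∧ ∀ Y ∈ S, ∀ f : Y ⟶ Z, f = 0

/-- The left Hom-orthogonal `^⊥S` inside the extended heart. -/
def lPerp (t : TStructure C) (d : ℕ) (S : Set C) : Set C :=
  fun Z => Z ∈ extHeart t d ∧ ∀ Y ∈ S, ∀ f : Z ⟶ Y, f = 0

/-- `S^{⊥_{≤0}} = {Z ∈ D^{[-d+1,0]} : Hom(S, Z[j]) = 0 for all j ≤ 0}`. -/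
def rPerpLe0 (t : TStructure C) (d : ℕ) (S : Set C) : Set C :=
  fun Z => Z ∈ extHeart t d ∧ ∀ Y ∈ S, ∀ j : ℤ, j ≤ 0 → ∀ f : Y ⟶ Z⟦j⟧, f = 0

/-- `^{⊥_{≤0}}S = {Z ∈ D^{[-d+1,0]} : Hom(Z, S[j]) = 0 for all j ≤ 0}`. -/
def lPerpLe0 (t : TStructure C) (d : ℕ) (S : Set C) : Set C :=
  fun Z => Z ∈ extHeart t d ∧ ∀ Y ∈ S, ∀ j : ℤ, j ≤ 0 → ∀ f : Z ⟶ Y⟦j⟧, f = 0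

/-- `(T, F)` is a torsion pair in the extended heart. -/
def IsTorsionPair (t : TStructure C) (d : ℕ) (T F : Set C) : Prop :=
  T ⊆ extHeart t d ∧ F ⊆ extHeart t d ∧ T = lPerp t d F ∧ F = rPerp t d T

/-- `(T, F)` is a positive torsion pair: a torsion pair with `Hom(T, F[j]) = 0` for all
`j ≤ 0`. -/
def IsPositiveTorsionPair (t : TStructure C) (d : ℕ) (T F : Set C) : Prop :=
  IsTorsionPair t d T F ∧
  ∀ X ∈ T, ∀ Y ∈ F, ∀ j : ℤ, j ≤ 0 → ∀ f : X ⟶ Y⟦j⟧, f = 0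

/-- `(T, F)` is an `s`-torsion pair in the extended heart: `D^{[-d+1,0]} = T * F`,
`Hom(T, F) = 0` and `Hom(T, F[-1]) = 0`. -/
def IsSTorsionPair (t : TStructure C) (d : ℕ) (T F : Set C) : Prop :=
  T ⊆ extHeart t d ∧ F ⊆ extHeart t d ∧
  (∀ Z ∈ extHeart t d,
    ∃ (X : C) (_ : X ∈ T) (Y : C) (_ : Y ∈ F) (f : X ⟶ Z) (g : Z ⟶ Y)
      (h : Y ⟶ X⟦(1 : ℤ)⟧), Triangle.mk f g h ∈ (distTriang C)) ∧
  (∀ X ∈ T, ∀ Y ∈ F, ∀ f : X ⟶ Y, f = 0) ∧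
  (∀ X ∈ T, ∀ Y ∈ F, ∀ f : X ⟶ Y⟦(-1 : ℤ)⟧, f = 0)

/-- A semibrick in the `d`-extended heart. -/
def IsSemibrick (t : TStructure C) (d : ℕ) (S : Set C) : Prop :=
  S ⊆ extHeart t d ∧
  (∀ X ∈ S, ¬ IsZero X ∧ ∀ f : X ⟶ X, f ≠ 0 → IsIso f) ∧
  (∀ X ∈ S, ∀ Y ∈ S, ∀ i : ℤ, i < 0 → ∀ f : X ⟶ Y⟦i⟧, f = 0) ∧
  (∀ X ∈ S, ∀ Y ∈ S, IsEmpty (X ≅ Y) → ∀ f : X ⟶ Y, f = 0)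

/-- The simple objects of an extension-closed subcategory `W` (whose conflations are the
distinguished triangles with all three terms in `W`): nonzero objects admitting no
conflation `L ↣ X ↠ M` in `W` with both `L` and `M` nonzero. -/
def simOf (W : Set C) : Set C := fun X =>
  X ∈ W ∧ ¬ IsZero X ∧
  ∀ ⦃L M : C⦄ (f : L ⟶ X) (g : X ⟶ M) (h : M ⟶ L⟦(1 : ℤ)⟧),
    Triangle.mk f g h ∈ (distTriang C) → L ∈ W → M ∈ W → IsZero L ∨ IsZero M

/-- `FiltMem S X`: the object `X` admits a finite filtration with subquotients in `S`. -/
inductive FiltMem (S : Set C) : C → Prop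
  | zero (X : C) : IsZero X → FiltMem S X
  | step (Y X Sm : C) (f : Y ⟶ X) (g : X ⟶ Sm) (h : Sm ⟶ Y⟦(1 : ℤ)⟧) :
      Triangle.mk f g h ∈ (distTriang C) → FiltMem S Y → Sm ∈ S → FiltMem S X

/-- `ExtClosureMem S X`: membership in the extension closure of `S` (the smallest
subcategory containing `S` and the zero objects, closed under isomorphisms and
extensions). -/
inductive ExtClosureMem (S : Set C) : C → Prop
  | of (X : C) : X ∈ S → ExtClosureMem S X
  | zero (X : C) : IsZero X → ExtClosureMem S X
  | iso (X Y : C) : (X ≅ Y) → ExtClosureMem S X → ExtClosureMem S Y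
  | ext (X Y Z : C) (f : X ⟶ Y) (g : Y ⟶ Z) (h : Z ⟶ X⟦(1 : ℤ)⟧) :
      Triangle.mk f g h ∈ (distTriang C) → ExtClosureMem S X → ExtClosureMem S Z →
      ExtClosureMem S Y

/-- A wide subcategory of the `d`-extended heart: closed under isomorphisms and
extensions, with `Hom(W, W[i]) = 0` for `i < 0`, and such that the restricted
extriangulated structure is abelian, i.e., there is an abelian structure on the
corresponding full subcategory whose short exact sequences (kernel-cokernel pairs) are
exactly the distinguished triangles with all three terms in `W`. -/
def IsWide (t : TStructure C) (d : ℕ) (W : Set C) : Prop :=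
  W ⊆ extHeart t d ∧ IsoClosed W ∧ ExtClosed W ∧
  (∀ X ∈ W, ∀ Y ∈ W, ∀ i : ℤ, i < 0 → ∀ f : X ⟶ Y⟦i⟧, f = 0) ∧
  ∃ _ : Abelian (ObjectProperty.FullSubcategory fun X => X ∈ W),
    ∀ (X Y Z : ObjectProperty.FullSubcategory fun X => X ∈ W) (f : X ⟶ Y) (g : Y ⟶ Z),
      ((f ≫ g = 0) ∧
        (∀ (V : ObjectProperty.FullSubcategory fun X => X ∈ W) (k : V ⟶ Y), k ≫ g = 0 →
          ∃! l : V ⟶ X, l ≫ f = k) ∧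
        (∀ (V : ObjectProperty.FullSubcategory fun X => X ∈ W) (k : Y ⟶ V), f ≫ k = 0 →
          ∃! l : Z ⟶ V, g ≫ l = k))
      ↔ ∃ h : Z.obj ⟶ X.obj⟦(1 : ℤ)⟧,
          Triangle.mk (show X.obj ⟶ Y.obj from f.hom) (show Y.obj ⟶ Z.obj from g.hom) h ∈
            (distTriang C)

/-- A finite-length wide subcategory: a wide subcategory in which every object has a
finite filtration with simple subquotients. -/
def IsFiniteLengthWide (t : TStructure C) (d : ℕ) (W : Set C) : Prop :=
  IsWide t d W ∧ ∀ X ∈ W, FiltMem (simOf W) X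

/-- The shift `S[n]` of a set of objects. -/
def shiftSet (S : Set C) (n : ℤ) : Set C := fun X => X⟦-n⟧ ∈ S

/-- The exact heart `H_T = (D^{≤ -d} * T) ∩ (T^⊥[1] * D^{≥ 0})` of a `d`-FAE closed
subcategory `T`. -/
def heartOf (t : TStructure C) (d : ℕ) (T : Set C) : Set C :=
  star (aisle t (-(d : ℤ))) T ∩ star (shiftSet (rPerp t d T) 1) (coaisle t 0)

/-- `phiClosure t d S`: the smallest `d`-FAE closed subcategory of the extended heart
containing `S`. -/
def phiClosure (t : TStructure C) (d : ℕ) (S : Set C) : Set C :=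
  fun X => ∀ U : Set C, IsDFAEClosed t d U → S ⊆ U → X ∈ U

/-- The iterated construction `Φ^n(S)`: `Φ^0(S) = S` and
`Φ^n(S) = (Fac_d Φ^{n-1}(S)) * (Fac_d Φ^{n-1}(S))`. -/
def PhiIter (t : TStructure C) (d : ℕ) (S : Set C) : ℕ → Set C
  | 0 => S
  | n + 1 => star (facd t d (PhiIter t d S n)) (facd t d (PhiIter t d S n))

/-!
The union `⋃ Φ^n(S)` is itself `d`-FAE closed. Every object `X` of the extended heart lying
in a class `𝒳` is a `d`-factor of `𝒳`, and so is `0`, through the contractible triangles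
`X → X → 0` and `0 → X → X`; hence `X ∈ X * 0` shows that the `Φ^n(S)` increase. The finitely
many objects involved in a `d`-factor or an extension therefore lie in a single `Φ^N(S)`, and
the result lies in `Φ^{N+1}(S)`. Conversely, each `Φ^n(S)` lies in every `d`-FAE closed class
containing `S`.
-/

open ZeroObject

section

variable {t : TStructure C} {d : ℕ}

lemma extClosed_extHeart : ExtClosed (extHeart t d) := by
  intro X Y Z f g h hT hX hZ
  exact ⟨(t.isLE₂ _ hT _ ⟨hX.1⟩ ⟨hZ.1⟩).le, (t.isGE₂ _ hT _ ⟨hX.2⟩ ⟨hZ.2⟩).ge⟩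

lemma zero_mem_extHeart : (0 : C) ∈ extHeart t d :=
  ⟨t.le_of_isLE 0 0, t.ge_of_isGE 0 _⟩

/-- Witnessed by the chain `Z_i = A` for even `i` and `Z_i = B` for odd `i`. -/
lemma isDFactor_of_periodic_triangles {𝒳 : Set C} {A B X : C} (hA : A ∈ extHeart t d)
    (hB : B ∈ extHeart t d) (hX : X ∈ 𝒳)
    {f₁ : A ⟶ X} {g₁ : X ⟶ B} {h₁ : B ⟶ A⟦(1 : ℤ)⟧} (hT₁ : Triangle.mk f₁ g₁ h₁ ∈ distTriang C)
    {f₂ : B ⟶ X} {g₂ : X ⟶ A} {h₂ : A ⟶ B⟦(1 : ℤ)⟧} (hT₂ : Triangle.mk f₂ g₂ h₂ ∈ distTriang C) :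
    IsDFactor t d 𝒳 A := by
  refine ⟨hA, fun i => if i % 2 = 0 then A else B, fun _ => X, rfl, fun i hi _ => ?_⟩
  rcases Nat.mod_two_eq_zero_or_one i with hi₀ | hi₁
  · have hZi : (if i % 2 = 0 then A else B) = A := if_pos hi₀
    have hZpred : (if (i - 1) % 2 = 0 then A else B) = B := if_neg (by omega)
    dsimp only
    rw [hZi, hZpred]
    exact ⟨hA, hX, f₁, g₁, h₁, hT₁⟩
  · have hZi : (if i % 2 = 0 then A else B) = B := if_neg (by omega)
    have hZpred : (if (i - 1) % 2 = 0 then A else B) = A := if_pos (by omega)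
    dsimp only
    rw [hZi, hZpred]
    exact ⟨hB, hX, f₂, g₂, h₂, hT₂⟩

lemma mem_facd_of_mem {𝒳 : Set C} {X : C} (hX : X ∈ extHeart t d) (hX𝒳 : X ∈ 𝒳) :
    X ∈ facd t d 𝒳 :=
  isDFactor_of_periodic_triangles hX zero_mem_extHeart hX𝒳
    (contractible_distinguished X) (contractible_distinguished₁ X)

lemma zero_mem_facd {𝒳 : Set C} {X : C} (hX : X ∈ extHeart t d) (hX𝒳 : X ∈ 𝒳) :
    (0 : C) ∈ facd t d 𝒳 :=
  isDFactor_of_periodic_triangles zero_mem_extHeart hX hX𝒳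
    (contractible_distinguished₁ X) (contractible_distinguished X)

lemma facd_mono {𝒳 𝒴 : Set C} (h : 𝒳 ⊆ 𝒴) : facd t d 𝒳 ⊆ facd t d 𝒴 := by
  rintro Z ⟨hZ, Zc, Xc, hZ₀, hchain⟩
  refine ⟨hZ, Zc, Xc, hZ₀, fun i hi hid => ?_⟩
  obtain ⟨hZi, hXi, hT⟩ := hchain i hi hid
  exact ⟨hZi, h hXi, hT⟩

lemma facd_subset_extHeart (𝒳 : Set C) : facd t d 𝒳 ⊆ extHeart t d :=
  fun _ hZ => hZ.1

end

lemma star_mono {A B A' B' : Set C} (hA : A ⊆ A') (hB : B ⊆ B') : star A B ⊆ star A' B' := by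
  rintro Z ⟨X, hX, Y, hY, f, g, h, hT⟩
  exact ⟨X, hA hX, Y, hB hY, f, g, h, hT⟩

lemma ExtClosed.star_subset {A : Set C} (hA : ExtClosed A) : star A A ⊆ A := by
  rintro Z ⟨X, hX, Y, hY, f, g, h, hT⟩
  exact hA f g h hT hX hY

lemma mem_star_of_mem_of_zero_mem {A B : Set C} {X : C} (hX : X ∈ A) (h0 : (0 : C) ∈ B) :
    X ∈ star A B :=
  ⟨X, hX, 0, h0, 𝟙 X, 0, 0, contractible_distinguished X⟩

lemma isoClosed_star (A B : Set C) : IsoClosed (star A B) := by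
  rintro Z Z' e ⟨X, hX, Y, hY, f, g, h, hT⟩
  refine ⟨X, hX, Y, hY, f ≫ e.hom, e.inv ≫ g, h, isomorphic_distinguished _ hT _ ?_⟩
  exact Triangle.isoMk _ _ (Iso.refl _) e.symm (Iso.refl _) (by simp [Triangle.mk])
    (by simp [Triangle.mk]) (by simp [Triangle.mk])

lemma Monotone.exists_forall_mem_of_forall_mem_iUnion {α β ι : Type*} [SemilatticeSup ι]
    [OrderBot ι] {s : ι → Set α} (hs : Monotone s) {x : β → α} (I : Finset β) (hx : ∀ i ∈ I, x i ∈ ⋃ n, s n) :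
    ∃ N, ∀ i ∈ I, x i ∈ s N := by
  choose! n hn using fun i hi => Set.mem_iUnion.1 (hx i hi)
  exact ⟨I.sup n, fun i hi => hs (Finset.le_sup hi) (hn i hi)⟩

section

variable {t : TStructure C} {d : ℕ} {S : Set C}

lemma PhiIter_subset_extHeart (hS : S ⊆ extHeart t d) :
    ∀ n, PhiIter t d S n ⊆ extHeart t d
  | 0 => hS
  | _ + 1 => (star_mono (facd_subset_extHeart _) (facd_subset_extHeart _)).trans
      extClosed_extHeart.star_subset

lemma PhiIter_monotone (hS : S ⊆ extHeart t d) : Monotone (PhiIter t d S) := by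
  refine monotone_nat_of_le_succ fun n => ?_
  induction n with
  | zero =>
    intro X hX
    exact mem_star_of_mem_of_zero_mem (mem_facd_of_mem (hS hX) hX) (zero_mem_facd (hS hX) hX)
  | succ n ih => exact star_mono (facd_mono ih) (facd_mono ih)

lemma PhiIter_subset_of_isDFAEClosed {V : Set C} (hV : IsDFAEClosed t d V) (hSV : S ⊆ V) :
    ∀ n, PhiIter t d S n ⊆ V
  | 0 => hSV
  | n + 1 =>
    have hfac : facd t d (PhiIter t d S n) ⊆ V :=
      (facd_mono (PhiIter_subset_of_isDFAEClosed hV hSV n)).trans hV.2.2.1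
    (star_mono hfac hfac).trans hV.2.2.2.star_subset

lemma isDFAEClosed_iUnion_PhiIter (hd : 1 ≤ d) (hS : S ⊆ extHeart t d) :
    IsDFAEClosed t d (⋃ n, PhiIter t d S n) := by
  have hmono := PhiIter_monotone hS
  have hheart := PhiIter_subset_extHeart hS
  refine ⟨Set.iUnion_subset hheart, ?iso, ?factors, ?extensions⟩
  case iso =>
    rintro X Y e hX
    obtain ⟨n, hn⟩ := Set.mem_iUnion.1 hX
    exact Set.mem_iUnion.2 ⟨n + 1, isoClosed_star _ _ e (hmono n.le_succ hn)⟩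
  case factors =>
    rintro Z ⟨hZ, Zc, Xc, hZ₀, hchain⟩
    obtain ⟨N, hN⟩ := hmono.exists_forall_mem_of_forall_mem_iUnion (Finset.Icc 1 d)
      (x := Xc) fun i hi => (hchain i (Finset.mem_Icc.1 hi).1 (Finset.mem_Icc.1 hi).2).2.1
    have hXN : ∀ i, 1 ≤ i → i ≤ d → Xc i ∈ PhiIter t d S N :=
      fun i hi hid => hN i (Finset.mem_Icc.2 ⟨hi, hid⟩)
    have hZN : Z ∈ facd t d (PhiIter t d S N) := ⟨hZ, Zc, Xc, hZ₀, fun i hi hid =>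
      ⟨(hchain i hi hid).1, hXN i hi hid, (hchain i hi hid).2.2⟩⟩
    have h0 : (0 : C) ∈ facd t d (PhiIter t d S N) :=
      zero_mem_facd (hheart N (hXN 1 le_rfl hd)) (hXN 1 le_rfl hd)
    exact Set.mem_iUnion.2 ⟨N + 1, mem_star_of_mem_of_zero_mem hZN h0⟩
  case extensions =>
    rintro X Y Z f g h hT hX hZ
    obtain ⟨m, hm⟩ := Set.mem_iUnion.1 hX
    obtain ⟨n, hn⟩ := Set.mem_iUnion.1 hZ
    have hX' := hmono (le_max_left m n) hm
    have hZ' := hmono (le_max_right m n) hn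
    exact Set.mem_iUnion.2 ⟨max m n + 1, X, mem_facd_of_mem (hheart _ hX') hX',
      Z, mem_facd_of_mem (hheart _ hZ') hZ', f, g, h, hT⟩

end

theorem phiClosure_eq_union_PhiIter_general (t : TStructure C)
    (d : ℕ) (hd : 1 ≤ d) (S : Set C) (hS : IsSemibrick t d S) :
    phiClosure t d S = fun X => ∃ n : ℕ, X ∈ PhiIter t d S n := by
  apply Set.Subset.antisymm
  · intro X hX
    exact Set.mem_iUnion.1 <| hX _ (isDFAEClosed_iUnion_PhiIter hd hS.1)
      (Set.subset_iUnion (PhiIter t d S) 0)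
  · rintro X ⟨n, hn⟩ V hV hSV
    exact PhiIter_subset_of_isDFAEClosed hV hSV n hn

/-- **(Lemma, explicit description of `φ(S)`.)** Let `S` be a semibrick in
`D^{[-d+1,0]}`. Then the smallest `d`-FAE closed subcategory `φ(S)` containing `S`
equals `⋃_{n ≥ 0} Φ^n(S)`. -/
theorem phiClosure_eq_union_PhiIter (t : TStructure C) (hb : IsBoundedTStr t)
    (d : ℕ) (hd : 1 ≤ d) (S : Set C) (hS : IsSemibrick t d S) :
    phiClosure t d S = fun X => ∃ n : ℕ, X ∈ PhiIter t d S n :=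
  phiClosure_eq_union_PhiIter_general t d hd S hS
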